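/- arXiv:2002.06672 — 9 statements merged into one kernel-verified Lean document; each statement's English description precedes it below -/
import Mathlib

section
/- For all polynomials a₁, b₁, a₂, b₂ in ℤ[x], writing p = (a₁,b₁), q = (a₂,b₂), one has x·(x² − 1) · N(p ⊕ q) = (N(p)·N(q) + D(p)·D(q))·x − (D(p)·N(q) + N(p)·D(q)). -/
open Polynomial

/-- Sum of bracket pairs: (a₁,b₁) ⊕ (a₂,b₂) = (a₁a₂, a₁b₂ + b₁a₂ + x·b₁b₂). -/
noncomputable def bpSum (p q : ℤ[X] × ℤ[X]) : ℤ[X] × ℤ[X] :=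
  (p.1 * q.1, p.1 * q.2 + p.2 * q.1 + X * (p.2 * q.2))

/-- n-th ⊕-power of a bracket pair. -/
noncomputable def bpPow (p : ℤ[X] × ℤ[X]) : ℕ → ℤ[X] × ℤ[X]
  | 0 => (1, 0)
  | n + 1 => bpSum p (bpPow p n)

/-- Denominator closure polynomial D(a,b) = x·a + x²·b. -/
noncomputable def bpD (p : ℤ[X] × ℤ[X]) : ℤ[X] := X * p.1 + X ^ 2 * p.2

/-- Numerator closure polynomial N(a,b) = x²·a + x·b. -/
noncomputable def bpN (p : ℤ[X] × ℤ[X]) : ℤ[X] := X ^ 2 * p.1 + X * p.2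

/-- R-closure polynomial R(a,b) = N(a,b) + D(a,b). -/
noncomputable def bpR (p : ℤ[X] × ℤ[X]) : ℤ[X] := bpN p + bpD p

theorem bpN_sum (a₁ b₁ a₂ b₂ : ℤ[X]) :
    X * (X ^ 2 - 1) * bpN (bpSum (a₁, b₁) (a₂, b₂)) =
      (bpN (a₁, b₁) * bpN (a₂, b₂) + bpD (a₁, b₁) * bpD (a₂, b₂)) * X -
        (bpD (a₁, b₁) * bpN (a₂, b₂) + bpN (a₁, b₁) * bpD (a₂, b₂)) := by
  simp only [bpN, bpD, bpSum]
  ring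
end

section
/- For all polynomials a₁, b₁, a₂, b₂ in ℤ[x], writing p = (a₁,b₁), q = (a₂,b₂), one has x·(x² − 1) · R(p ⊕ q) = D(p)·D(q)·x² + (N(p)·N(q) + D(p)·D(q))·x − (D(p)·N(q) + N(p)·D(q) + D(p)·D(q)). -/
open Polynomial

theorem X_mul_bpD_bpSum (p q : ℤ[X] × ℤ[X]) : X * bpD (bpSum p q) = bpD p * bpD q := by
  simp only [bpD, bpSum]
  ring

/- Inverting `(a, b) ↦ (D, N)` gives `X * (X ^ 2 - 1) * a = X * N - D` and
`X * (X ^ 2 - 1) * b = X * D - N`; substituting these into `N (p ⊕ q)` yields the right-hand side. -/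
theorem bpN_bpSum (p q : ℤ[X] × ℤ[X]) :
    X * (X ^ 2 - 1) * bpN (bpSum p q) =
      X * (bpN p * bpN q + bpD p * bpD q) - (bpD p * bpN q + bpN p * bpD q) := by
  simp only [bpN, bpD, bpSum]
  ring

theorem bpR_sum (a₁ b₁ a₂ b₂ : ℤ[X]) :
    X * (X ^ 2 - 1) * bpR (bpSum (a₁, b₁) (a₂, b₂)) =
      bpD (a₁, b₁) * bpD (a₂, b₂) * X ^ 2 +
        (bpN (a₁, b₁) * bpN (a₂, b₂) + bpD (a₁, b₁) * bpD (a₂, b₂)) * X -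
        (bpD (a₁, b₁) * bpN (a₂, b₂) + bpN (a₁, b₁) * bpD (a₂, b₂) +
          bpD (a₁, b₁) * bpD (a₂, b₂)) := by
  rw [bpR]
  linear_combination
    bpN_bpSum (a₁, b₁) (a₂, b₂) + (X ^ 2 - 1) * X_mul_bpD_bpSum (a₁, b₁) (a₂, b₂)
end

section
/- For all polynomials a, b in ℤ[x] and every natural number n, the n-th ⊕-power of the bracket pair (a,b) is the pair (aₙ, bₙ) with aₙ = aⁿ and x · bₙ = (a + x·b)ⁿ − aⁿ. -/
open Polynomial

/-! The map `(a, b) ↦ a + x·b` turns `⊕` into multiplication, since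
`a₁a₂ + x(a₁b₂ + b₁a₂ + x·b₁b₂) = (a₁ + x·b₁)(a₂ + x·b₂)`; together with the first
components this makes `(a, b) ↦ (a, a + x·b)` a multiplicative map, so it sends
`(a, b)^⊕n` to `(aⁿ, (a + x·b)ⁿ)`. -/

theorem bpSum_fst (p q : ℤ[X] × ℤ[X]) : (bpSum p q).1 = p.1 * q.1 := rfl

theorem bpSum_fst_add_X_mul_snd (p q : ℤ[X] × ℤ[X]) :
    (bpSum p q).1 + X * (bpSum p q).2 = (p.1 + X * p.2) * (q.1 + X * q.2) := by
  simp only [bpSum]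
  ring

theorem bpPow_fst (p : ℤ[X] × ℤ[X]) (n : ℕ) : (bpPow p n).1 = p.1 ^ n := by
  induction n with
  | zero => rfl
  | succ n ih => rw [bpPow, bpSum_fst, ih, pow_succ']

theorem bpPow_fst_add_X_mul_snd (p : ℤ[X] × ℤ[X]) (n : ℕ) :
    (bpPow p n).1 + X * (bpPow p n).2 = (p.1 + X * p.2) ^ n := by
  induction n with
  | zero => simp [bpPow]
  | succ n ih => rw [bpPow, bpSum_fst_add_X_mul_snd, ih, pow_succ']

theorem bpPow_formula (a b : ℤ[X]) (n : ℕ) :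
    (bpPow (a, b) n).1 = a ^ n ∧
    X * (bpPow (a, b) n).2 = (a + X * b) ^ n - a ^ n := by
  have hfst : (bpPow (a, b) n).1 = a ^ n := bpPow_fst (a, b) n
  refine ⟨hfst, eq_sub_of_add_eq' ?_⟩
  rw [← hfst]
  exact bpPow_fst_add_X_mul_snd (a, b) n
end

section
/- For all polynomials a, b in ℤ[x] and every natural number n, the R-closure polynomial of the n-th ⊕-power of (a,b) equals (x + 1)·(a + x·b)ⁿ + (x² − 1)·aⁿ. -/
open Polynomial

/-! In the coordinates `(a, a + x·b)` the sum `⊕` of bracket pairs is componentwise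
multiplication, so the `n`-th `⊕`-power of `(a, b)` has coordinates `(aⁿ, (a + x·b)ⁿ)`;
and `R(a, b) = x(x + 1)(a + b)` is linear in these coordinates. -/

noncomputable def bpDiag (p : ℤ[X] × ℤ[X]) : ℤ[X] × ℤ[X] := (p.1, p.1 + X * p.2)

theorem bpDiag_bpSum (p q : ℤ[X] × ℤ[X]) : bpDiag (bpSum p q) = bpDiag p * bpDiag q := by
  refine Prod.ext rfl ?_
  simp only [bpDiag, bpSum, Prod.snd_mul]
  ring

theorem bpDiag_bpPow (p : ℤ[X] × ℤ[X]) (n : ℕ) : bpDiag (bpPow p n) = bpDiag p ^ n := by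
  induction n with
  | zero => simp [bpDiag, bpPow, Prod.one_eq_mk]
  | succ n ih => rw [bpPow, bpDiag_bpSum, ih, pow_succ']

theorem bpR_eq_bpDiag (p : ℤ[X] × ℤ[X]) :
    bpR p = (X + 1) * ((bpDiag p).2 + (X - 1) * (bpDiag p).1) := by
  simp only [bpR, bpN, bpD, bpDiag]
  ring

theorem bpR_pow (a b : ℤ[X]) (n : ℕ) :
    bpR (bpPow (a, b) n) = (X + 1) * (a + X * b) ^ n + (X ^ 2 - 1) * a ^ n := by
  rw [bpR_eq_bpDiag, bpDiag_bpPow, Prod.pow_fst, Prod.pow_snd]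
  simp only [bpDiag]
  ring
end

section
/- Let K be the field of fractions of ℤ[x] and let ι : ℤ[x] → K be the canonical embedding. For all polynomials a, b in ℤ[x] with a ≠ 0 and every natural number n, writing (aₙ, bₙ) for the n-th ⊕-power of (a,b), one has ι(x) · (ι(bₙ)/ι(aₙ)) = (1 + ι(x)·(ι(b)/ι(a)))ⁿ − 1. -/
open Polynomial

/-!
Both `p ↦ p.1` and `p ↦ p.1 + x·p.2` turn `⊕` into multiplication, so the `n`-th power
`(aₙ, bₙ)` satisfies `aₙ = aⁿ` and `aₙ + x·bₙ = (a + x·b)ⁿ`. Dividing the second identity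
by `aⁿ` gives `1 + x·(bₙ/aₙ) = (1 + x·(b/a))ⁿ`.
-/

noncomputable def bpWeight (p : ℤ[X] × ℤ[X]) : ℤ[X] := p.1 + X * p.2

theorem bpWeight_bpSum (p q : ℤ[X] × ℤ[X]) :
    bpWeight (bpSum p q) = bpWeight p * bpWeight q := by
  simp only [bpWeight, bpSum]
  ring

theorem bpWeight_bpPow (p : ℤ[X] × ℤ[X]) (n : ℕ) : bpWeight (bpPow p n) = bpWeight p ^ n := by
  induction n with
  | zero => simp [bpPow, bpWeight]
  | succ n ih => rw [bpPow, bpWeight_bpSum, ih, pow_succ']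

theorem bpFraction_pow (a b : ℤ[X]) (h : a ≠ 0) (n : ℕ) :
    let ι : ℤ[X] →+* FractionRing ℤ[X] := algebraMap ℤ[X] (FractionRing ℤ[X])
    ι X * (ι (bpPow (a, b) n).2 / ι (bpPow (a, b) n).1) =
      (1 + ι X * (ι b / ι a)) ^ n - 1 := by
  intro ι
  have ha : ι a ≠ 0 := (map_ne_zero_iff ι (IsFractionRing.injective _ _)).mpr h
  have hweight := congrArg ι (bpWeight_bpPow (a, b) n)
  simp only [bpWeight, bpPow_fst, map_add, map_mul, map_pow] at hweight
  have hbase : 1 + ι X * (ι b / ι a) = (ι a + ι X * ι b) / ι a := by field_simp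
  rw [bpPow_fst, map_pow, hbase, div_pow, ← hweight]
  field_simp
  ring
end

section
/- For every natural number n, the R-closure polynomial of the n-th ⊕-power of the bracket pair (1, 1) equals (x + 1)ⁿ⁺¹ + x² − 1. (This is the bracket polynomial of the R-closure of the twist tangle [n].) -/
open Polynomial

/-! Writing a bracket pair (a, b) as a + b·ε, the sum ⊕ is multiplication in ℤ[x][ε]/(ε² = xε).
Both ε ↦ 0 and ε ↦ x are ring maps to ℤ[x], so a and a + x·b are multiplicative under ⊕.
For (1, 1)^⊕n this gives a = 1 and a + x·b = (x + 1)ⁿ, and R(a, b) = (x + 1)·((x - 1)·a + (a + x·b)). -/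

noncomputable def bpEvalX (p : ℤ[X] × ℤ[X]) : ℤ[X] := p.1 + X * p.2

theorem bpEvalX_bpSum (p q : ℤ[X] × ℤ[X]) :
    bpEvalX (bpSum p q) = bpEvalX p * bpEvalX q := by
  simp only [bpEvalX, bpSum]
  ring

theorem bpEvalX_bpPow (p : ℤ[X] × ℤ[X]) (n : ℕ) : bpEvalX (bpPow p n) = bpEvalX p ^ n := by
  induction n with
  | zero => simp [bpPow, bpEvalX]
  | succ n ih => rw [bpPow, bpEvalX_bpSum, ih, pow_succ']

theorem bpR_eq (p : ℤ[X] × ℤ[X]) : bpR p = (X + 1) * ((X - 1) * p.1 + bpEvalX p) := by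
  simp only [bpR, bpN, bpD, bpEvalX]
  ring

theorem twist_R (n : ℕ) :
    bpR (bpPow (1, 1) n) = (X + 1) ^ (n + 1) + X ^ 2 - 1 := by
  rw [bpR_eq, bpPow_fst, bpEvalX_bpPow, bpEvalX]
  ring
end

section
/- For every natural number n, the numerator closure polynomial of the n-th ⊕-power of the bracket pair (x² + 3x + 3, 1) equals (x² + 4x + 3)ⁿ + (x² − 1)·(x² + 3x + 3)ⁿ. (This is the bracket polynomial of the numerator closure of the n-fold horizontal sum of the tangle 1/[3].) -/
/-!
Sending a bracket pair `(a, b)` to the pair `(a, a + x·b)` turns `⊕` into componentwise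
multiplication. Hence the `n`-th `⊕`-power of `(a, b)` has first entry `aⁿ` and
`a + x·b`-entry `(a + x·b)ⁿ`, while `N(a, b) = (a + x·b) + (x² - 1)·a`.
-/

open Polynomial

theorem bpN_eq (p : ℤ[X] × ℤ[X]) : bpN p = (p.1 + X * p.2) + (X ^ 2 - 1) * p.1 := by
  rw [bpN]
  ring

theorem bpN_bpPow (p : ℤ[X] × ℤ[X]) (n : ℕ) :
    bpN (bpPow p n) = (p.1 + X * p.2) ^ n + (X ^ 2 - 1) * p.1 ^ n := by
  rw [bpN_eq, bpPow_fst_add_X_mul_snd, bpPow_fst]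

theorem inv3_N (n : ℕ) :
    bpN (bpPow (X ^ 2 + 3 * X + 3, 1) n) =
      (X ^ 2 + 4 * X + 3) ^ n + (X ^ 2 - 1) * (X ^ 2 + 3 * X + 3) ^ n := by
  rw [bpN_bpPow]
  ring
end

section
/- For every natural number n, the denominator closure polynomial of the n-th ⊕-power of the bracket pair (3x + 4, x² + 4x + 4) equals x·(x³ + 4x² + 7x + 4)ⁿ. (This is the bracket polynomial of the denominator closure of the n-fold horizontal sum of the tangle [2]∗[2].) -/
open Polynomial

theorem bpD_bpSum (p q : ℤ[X] × ℤ[X]) : bpD (bpSum p q) = (p.1 + X * p.2) * bpD q := by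
  simp only [bpSum, bpD]
  ring

theorem bpD_bpPow (p : ℤ[X] × ℤ[X]) (n : ℕ) : bpD (bpPow p n) = X * (p.1 + X * p.2) ^ n := by
  induction n with
  | zero => simp [bpPow, bpD]
  | succ n ih => rw [bpPow, bpD_bpSum, ih]; ring

theorem twotwo_D (n : ℕ) :
    bpD (bpPow (3 * X + 4, X ^ 2 + 4 * X + 4) n) =
      X * (X ^ 3 + 4 * X ^ 2 + 7 * X + 4) ^ n := by
  rw [bpD_bpPow]
  ring
end

section
/- For every natural number n, the denominator closure polynomial of the n-th ⊕-power of the bracket pair (x + 2, 2x² + 6x + 5) equals x·(2x³ + 6x² + 6x + 2)ⁿ. (This is the bracket polynomial of the denominator closure of the n-fold horizontal sum of the tangle [2] + 1/[2].) -/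
open Polynomial

theorem bpD_eq_X_mul (p : ℤ[X] × ℤ[X]) : bpD p = X * (p.1 + X * p.2) := by
  simp only [bpD]
  ring

theorem twoPlusInv2_D (n : ℕ) :
    bpD (bpPow (X + 2, 2 * X ^ 2 + 6 * X + 5) n) =
      X * (2 * X ^ 3 + 6 * X ^ 2 + 6 * X + 2) ^ n := by
  rw [bpD_bpPow]
  ring
end
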